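/- Let ω ∈ ℝ satisfy cos(πω) ≠ 0, let λ ∈ ℝ and let n ≥ 1 be an integer. Then there exist real numbers α̃_0, α̃_2, …, α̃_{2n} such that P̃_n(λ') = ∑_{k=0}^{n} α̃_{2k} (λ')^{2k} for all λ' ∈ ℝ, and α̃_2 = |1 − exp(2πi·(ω + 1/2)·n)|² / (2·cos²(πω)); in particular α̃_2 ≤ 2/cos²(πω), a bound independent of n. -/

import Mathlib

open MeasureTheory Real
open scoped Matrix

/-- The Almost-Mathieu potential `ṽ_j(θ) = 2 cos(2π(jω + θ))`. -/
noncomputable def vAM (ω : ℝ) (j : ℕ) (θ : ℝ) : ℝ :=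
  2 * Real.cos (2 * Real.pi * ((j : ℝ) * ω + θ))

/-- The zero-energy Almost-Mathieu transfer matrix `Ã_j(θ)`. -/
noncomputable def AAM (ω lam : ℝ) (j : ℕ) (θ : ℝ) : Matrix (Fin 2) (Fin 2) ℝ :=
  !![-(lam * vAM ω j θ), -1; 1, 0]

/-- The products `M̃_n(θ) = Ã_n(θ) ⋯ Ã_1(θ)`. -/
noncomputable def MAM (ω lam : ℝ) : ℕ → ℝ → Matrix (Fin 2) (Fin 2) ℝ
  | 0, _ => 1
  | n + 1, θ => AAM ω lam (n + 1) θ * MAM ω lam n θ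

/-- `P̃_n(λ) = ∫₀¹ Tr(M̃_n(θ)ᵀ M̃_n(θ)) dθ`. -/
noncomputable def PAM (ω : ℝ) (n : ℕ) (lam : ℝ) : ℝ :=
  ∫ θ in (0:ℝ)..1, Matrix.trace ((MAM ω lam n θ)ᵀ * MAM ω lam n θ)

/-!
Write `Ã_j = J + λ·(-ṽ_j E)` with `J` the rotation by `π/2` and `E = e₀e₀ᵀ`, and expand
`M̃_n(θ) = ∑_m λ^m D_m(θ)`, so that `P̃_n(λ) = ∑ λ^(m+m') ∫₀¹ Tr(D_mᵀ D_m')`. Shifting `θ` by `1/2`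
negates every `ṽ_j`, hence multiplies `D_m` by `(-1)^m`: the pairings with `m + m'` odd vanish and
`P̃_n` is even. The `λ²`-coefficient is `∫ Tr(D_1ᵀD_1) + 2 ∫ Tr(D_0ᵀD_2)`. Both are double sums
over `j, k < n` of `∫₀¹ ṽ_{j+1} ṽ_{k+1} = 2cos(2π(j-k)ω)` against traces of products of rotations
and `E`, namely `cos²((j-k)π/2)` and `-sin²((j-k)π/2)`. After symmetrising the second sum they add
up to `∑_{j,k} 2cos((j-k)·2π(ω+1/2)) = 2|∑_{j<n} ζ^j|²` with `ζ = exp(2πi(ω+1/2))`, a geometric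
sum, and `|1 - ζ| = 2|cos(πω)|`.
-/

open Finset Matrix

section Perturbation

variable {R : Type*} [Ring R]

/-- `perturbCoeff J B n m` is the coefficient of `c ^ m` in `(J + c B n) ⋯ (J + c B 1)`. -/
def perturbCoeff (J : R) (B : ℕ → R) : ℕ → ℕ → R
  | 0, 0 => 1
  | 0, _ + 1 => 0
  | n + 1, 0 => J * perturbCoeff J B n 0
  | n + 1, m + 1 => J * perturbCoeff J B n (m + 1) + B (n + 1) * perturbCoeff J B n m

variable (J : R) (B : ℕ → R)

theorem perturbCoeff_eq_zero_of_lt {n m : ℕ} (h : n < m) : perturbCoeff J B n m = 0 := by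
  induction n generalizing m with
  | zero => obtain ⟨m, rfl⟩ : ∃ k, m = k + 1 := ⟨m - 1, by omega⟩; rfl
  | succ n ih =>
    obtain ⟨m, rfl⟩ : ∃ k, m = k + 1 := ⟨m - 1, by omega⟩
    rw [perturbCoeff, ih (by omega), ih (by omega), mul_zero, mul_zero, add_zero]

theorem eq_sum_perturbCoeff {𝕜 : Type*} [CommRing 𝕜] [Algebra 𝕜 R] (c : 𝕜) (M : ℕ → R)
    (h0 : M 0 = 1) (hsucc : ∀ n, M (n + 1) = (J + c • B (n + 1)) * M n) (n : ℕ) :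
    M n = ∑ m ∈ range (n + 1), c ^ m • perturbCoeff J B n m := by
  induction n with
  | zero => simp [h0, perturbCoeff]
  | succ n ih =>
    have hJ : ∑ m ∈ range (n + 1), c ^ m • (J * perturbCoeff J B n m) =
        ∑ m ∈ range (n + 1), c ^ (m + 1) • (J * perturbCoeff J B n (m + 1)) +
          J * perturbCoeff J B n 0 := by
      rw [sum_range_succ' _ n, sum_range_succ _ n, perturbCoeff_eq_zero_of_lt J B n.lt_succ_self,
        mul_zero, smul_zero, add_zero, pow_zero, one_smul]
    rw [hsucc, ih, sum_range_succ' _ (n + 1), add_mul, mul_sum, mul_sum]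
    simp only [perturbCoeff, smul_add, sum_add_distrib, mul_smul_comm, smul_mul_assoc, pow_zero,
      one_smul, hJ, pow_succ, mul_smul]
    abel

theorem perturbCoeff_zero_right (n : ℕ) : perturbCoeff J B n 0 = J ^ n := by
  induction n with
  | zero => exact (pow_zero J).symm
  | succ n ih => rw [perturbCoeff, ih, pow_succ']

theorem perturbCoeff_one_right (n : ℕ) :
    perturbCoeff J B n 1 = ∑ j ∈ range n, J ^ (n - 1 - j) * B (j + 1) * J ^ j := by
  induction n with
  | zero => rfl
  | succ n ih =>
    rw [perturbCoeff, ih, perturbCoeff_zero_right, mul_sum, sum_range_succ, Nat.add_sub_cancel,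
      Nat.sub_self, pow_zero, one_mul]
    congr 1
    refine sum_congr rfl fun j hj => ?_
    rw [show n - j = n - 1 - j + 1 by simp at hj; omega, pow_succ']
    simp only [mul_assoc]

theorem perturbCoeff_two_right (n : ℕ) :
    perturbCoeff J B n 2 = ∑ k ∈ range n, ∑ j ∈ range k,
      J ^ (n - 1 - k) * B (k + 1) * J ^ (k - 1 - j) * B (j + 1) * J ^ j := by
  induction n with
  | zero => rfl
  | succ n ih =>
    rw [perturbCoeff, ih, perturbCoeff_one_right, mul_sum, mul_sum, sum_range_succ,
      Nat.add_sub_cancel, Nat.sub_self, pow_zero, one_mul]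
    congr 1
    · refine sum_congr rfl fun k hk => ?_
      rw [mul_sum]
      refine sum_congr rfl fun j _ => ?_
      rw [show n - k = n - 1 - k + 1 by simp at hk; omega, pow_succ']
      simp only [mul_assoc]
    · simp only [mul_assoc]

theorem perturbCoeff_neg (n m : ℕ) :
    perturbCoeff J (-B) n m = (-1 : ℤ) ^ m • perturbCoeff J B n m := by
  induction n generalizing m with
  | zero => cases m <;> simp [perturbCoeff]
  | succ n ih =>
    cases m with
    | zero => simp [perturbCoeff, ih]
    | succ m =>
      simp only [perturbCoeff, ih, Pi.neg_apply, neg_mul, mul_smul_comm, smul_add, pow_succ,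
        mul_neg, mul_one, neg_smul, smul_neg]

theorem continuous_perturbCoeff [TopologicalSpace R] [IsTopologicalRing R] {X : Type*}
    [TopologicalSpace X] (f : ℕ → X → R) (hf : ∀ j, Continuous (f j)) (n m : ℕ) :
    Continuous fun x => perturbCoeff J (fun j => f j x) n m := by
  induction n generalizing m with
  | zero => cases m <;> exact continuous_const
  | succ n ih =>
    cases m with
    | zero => exact continuous_const.mul (ih 0)
    | succ m => exact (continuous_const.mul (ih (m + 1))).add ((hf (n + 1)).mul (ih m))

end Perturbation

section Single

variable {α n : Type*} [CommSemiring α] [Fintype n] [DecidableEq n] (i : n)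

theorem single_mul_mul_single_self (A : Matrix n n α) :
    single i i 1 * A * single i i 1 = A i i • single i i 1 := by
  rw [single_mul_mul_single, one_mul, mul_one, smul_single, smul_eq_mul, mul_one]

theorem trace_mul_single_mul (A B : Matrix n n α) :
    trace (A * single i i 1 * B) = (B * A) i i := by
  rw [trace_mul_cycle, trace_mul_single, MulOpposite.op_one, one_smul]

theorem trace_transpose_mul_of_single (A B C D : Matrix n n α) :
    trace ((A * single i i 1 * B)ᵀ * (C * single i i 1 * D)) = (Aᵀ * C) i i * (D * Bᵀ) i i := by
  have : (A * single i i 1 * B)ᵀ * (C * single i i 1 * D) =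
      (Bᵀ * (single i i 1 * (Aᵀ * C) * single i i 1)) * D := by
    simp only [transpose_mul, transpose_single, Matrix.mul_assoc]
  rw [this, single_mul_mul_single_self, Matrix.mul_smul, Matrix.smul_mul, trace_smul,
    trace_mul_single_mul, smul_eq_mul]

end Single

section Rotation

noncomputable def rot (t : ℝ) : Matrix (Fin 2) (Fin 2) ℝ := !![cos t, -sin t; sin t, cos t]

theorem rot_mul_rot (s t : ℝ) : rot s * rot t = rot (s + t) := by
  ext i j; fin_cases i <;> fin_cases j <;> simp [rot, cos_add, sin_add] <;> ring

theorem rot_transpose (t : ℝ) : (rot t)ᵀ = rot (-t) := by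
  ext i j; fin_cases i <;> fin_cases j <;> simp [rot]

theorem rot_zero : rot 0 = 1 := by
  ext i j; fin_cases i <;> fin_cases j <;> simp [rot]

theorem rot_pow (t : ℝ) (k : ℕ) : rot t ^ k = rot (k * t) := by
  induction k with
  | zero => simp [rot_zero]
  | succ k ih => rw [pow_succ, ih, rot_mul_rot]; push_cast; ring_nf

theorem rot_apply_zero_zero (t : ℝ) : rot t 0 0 = cos t := rfl

theorem trace_rot_single_rot (a b c d : ℝ) :
    trace ((rot a * single 0 0 1 * rot b)ᵀ * (rot c * single 0 0 1 * rot d)) =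
      cos (c - a) * cos (d - b) := by
  rw [trace_transpose_mul_of_single, rot_transpose, rot_transpose, rot_mul_rot, rot_mul_rot,
    rot_apply_zero_zero, rot_apply_zero_zero, neg_add_eq_sub, ← sub_eq_add_neg]

theorem trace_rot_rot_single_rot_single_rot (a b c d : ℝ) :
    trace ((rot a)ᵀ * (rot b * single 0 0 1 * rot c * single 0 0 1 * rot d)) =
      cos c * cos (b + d - a) := by
  have : (rot a)ᵀ * (rot b * single 0 0 1 * rot c * single 0 0 1 * rot d) =
      (rot a)ᵀ * rot b * (single 0 0 1 * rot c * single 0 0 1) * rot d := by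
    simp only [Matrix.mul_assoc]
  rw [this, single_mul_mul_single_self, Matrix.mul_smul, Matrix.smul_mul, trace_smul,
    trace_mul_single_mul, rot_transpose, rot_mul_rot, rot_mul_rot,
    rot_apply_zero_zero, rot_apply_zero_zero, smul_eq_mul]
  ring_nf

end Rotation

section Sums

variable {M : Type*} [AddCommMonoid M]

theorem sum_range_sum_range_eq_sum_antidiagonal (n : ℕ) (f : ℕ → ℕ → M)
    (hf : ∀ m m', n < m ∨ n < m' → f m m' = 0) :
    ∑ m ∈ range (n + 1), ∑ m' ∈ range (n + 1), f m m' =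
      ∑ s ∈ range (2 * n + 1), ∑ p ∈ antidiagonal s, f p.1 p.2 := by
  rw [← sum_product', ← sum_fiberwise_of_maps_to (g := fun p => p.1 + p.2)
    (t := range (2 * n + 1)) (fun p hp => by simp only [mem_product, mem_range] at hp ⊢; omega)]
  refine sum_congr rfl fun s _ => sum_subset (fun p hp => ?_) fun p hps hp => hf _ _ ?_
  · simpa using (mem_filter.mp hp).2
  · simp only [mem_filter, mem_product, mem_range, HasAntidiagonal.mem_antidiagonal] at hp hps ⊢
    omega

theorem sum_range_two_mul_add_one_of_odd_eq_zero (g : ℕ → M) (hg : ∀ s, Odd s → g s = 0)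
    (n : ℕ) : ∑ s ∈ range (2 * n + 1), g s = ∑ k ∈ range (n + 1), g (2 * k) := by
  induction n with
  | zero => simp
  | succ n ih =>
    rw [show 2 * (n + 1) + 1 = 2 * n + 1 + 1 + 1 by ring, sum_range_succ, sum_range_succ, ih,
      hg _ (odd_two_mul_add_one n), add_zero, sum_range_succ (fun k => g (2 * k)) (n + 1),
      mul_add_one]

theorem sum_range_sum_range_eq_two_nsmul_sum_lt (f : ℕ → ℕ → M) (hsymm : ∀ j k, f j k = f k j)
    (hdiag : ∀ j, f j j = 0) (n : ℕ) :
    ∑ j ∈ range n, ∑ k ∈ range n, f j k = 2 • ∑ j ∈ range n, ∑ k ∈ range j, f j k := by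
  induction n with
  | zero => simp
  | succ n ih =>
    simp only [sum_range_succ, sum_add_distrib, ih, hdiag, add_zero, smul_add]
    simp only [hsymm n, two_nsmul]
    abel

end Sums

theorem Nat.cast_sub_one_sub {R : Type*} [AddCommGroupWithOne R] {n k : ℕ} (h : k < n) :
    ((n - 1 - k : ℕ) : R) = n - 1 - k := by
  rw [Nat.sub_sub, Nat.cast_sub (by omega), Nat.cast_add, Nat.cast_one, sub_add_eq_sub_sub]

section AlmostMathieu

variable (ω : ℝ)

@[fun_prop]
theorem continuous_vAM (j : ℕ) : Continuous (vAM ω j) := by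
  unfold vAM; fun_prop

theorem vAM_add_half (j : ℕ) (θ : ℝ) : vAM ω j (θ + 1 / 2) = -vAM ω j θ := by
  rw [vAM, vAM, show 2 * π * (j * ω + (θ + 1 / 2)) = 2 * π * (j * ω + θ) + π by ring, cos_add_pi,
    mul_neg]

theorem vAM_add_one (j : ℕ) (θ : ℝ) : vAM ω j (θ + 1) = vAM ω j θ := by
  rw [vAM, vAM, show 2 * π * (j * ω + (θ + 1)) = 2 * π * (j * ω + θ) + 2 * π by ring,
    cos_add_two_pi]

theorem integral_vAM_mul_vAM (a b : ℕ) :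
    ∫ θ in (0 : ℝ)..1, vAM ω a θ * vAM ω b θ = 2 * cos (2 * π * ((a - b) * ω)) := by
  have hprod : ∀ θ, vAM ω a θ * vAM ω b θ =
      2 * cos (2 * π * ((a - b) * ω)) + 2 * cos (4 * π * θ + 2 * π * ((a + b) * ω)) := by
    intro θ
    rw [vAM, vAM, show 2 * π * ((a - b) * ω) = 2 * π * (a * ω + θ) - 2 * π * (b * ω + θ) by ring,
      show 4 * π * θ + 2 * π * ((a + b) * ω) = 2 * π * (a * ω + θ) + 2 * π * (b * ω + θ) by ring,
      cos_sub, cos_add]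
    ring
  simp only [hprod]
  rw [intervalIntegral.integral_add intervalIntegrable_const
    (Continuous.intervalIntegrable (by fun_prop) _ _)]
  simp only [intervalIntegral.integral_const, intervalIntegral.integral_const_mul,
    intervalIntegral.integral_comp_mul_add (fun x => cos x) (by positivity : 4 * π ≠ 0),
    integral_cos]
  rw [show 4 * π * 1 + 2 * π * ((a + b) * ω) = 2 * π * ((a + b) * ω) + 2 * π + 2 * π by ring,
    sin_add_two_pi, sin_add_two_pi]
  simp

theorem integral_sum_sum_vAM_mul_vAM (s : Finset ℕ) (t : ℕ → Finset ℕ) (c : ℕ → ℕ → ℝ) :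
    ∫ θ in (0 : ℝ)..1, ∑ j ∈ s, ∑ k ∈ t j, vAM ω (j + 1) θ * vAM ω (k + 1) θ * c j k =
      ∑ j ∈ s, ∑ k ∈ t j, 2 * cos (2 * π * ((j - k) * ω)) * c j k := by
  rw [intervalIntegral.integral_finsetSum fun j _ =>
    Continuous.intervalIntegrable (by fun_prop) _ _]
  refine sum_congr rfl fun j _ => ?_
  rw [intervalIntegral.integral_finsetSum fun k _ =>
    Continuous.intervalIntegrable (by fun_prop) _ _]
  refine sum_congr rfl fun k _ => ?_
  rw [intervalIntegral.integral_mul_const, integral_vAM_mul_vAM]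
  push_cast
  ring_nf

theorem AAM_eq (lam : ℝ) (j : ℕ) (θ : ℝ) :
    AAM ω lam j θ = rot (π / 2) + lam • (-vAM ω j θ • single 0 0 1) := by
  ext a b; fin_cases a <;> fin_cases b <;> simp [AAM, rot]

/-- The coefficient of `λ ^ m` in `M̃_n(θ)`. -/
noncomputable def amCoeff (n m : ℕ) (θ : ℝ) : Matrix (Fin 2) (Fin 2) ℝ :=
  perturbCoeff (rot (π / 2)) (fun j => -vAM ω j θ • single 0 0 1) n m

theorem MAM_eq_sum_amCoeff (lam : ℝ) (n : ℕ) (θ : ℝ) :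
    MAM ω lam n θ = ∑ m ∈ range (n + 1), lam ^ m • amCoeff ω n m θ :=
  eq_sum_perturbCoeff _ _ lam (fun n => MAM ω lam n θ) rfl
    (fun n => by rw [MAM, AAM_eq]) n

theorem amCoeff_add_half (n m : ℕ) (θ : ℝ) :
    amCoeff ω n m (θ + 1 / 2) = (-1 : ℤ) ^ m • amCoeff ω n m θ := by
  rw [amCoeff, amCoeff, ← perturbCoeff_neg]
  congr 1
  ext1 j
  simp only [vAM_add_half, Pi.neg_apply, neg_smul, neg_neg]

theorem amCoeff_add_one (n m : ℕ) (θ : ℝ) : amCoeff ω n m (θ + 1) = amCoeff ω n m θ := by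
  simp only [amCoeff, vAM_add_one]

@[fun_prop]
theorem continuous_amCoeff (n m : ℕ) : Continuous (amCoeff ω n m) :=
  continuous_perturbCoeff _ (fun j θ => -vAM ω j θ • single 0 0 1)
    (fun j => by fun_prop) n m

noncomputable def amPairing (n m m' : ℕ) : ℝ :=
  ∫ θ in (0 : ℝ)..1, trace ((amCoeff ω n m θ)ᵀ * amCoeff ω n m' θ)

theorem PAM_eq_sum_amPairing (n : ℕ) (lam : ℝ) :
    PAM ω n lam =
      ∑ m ∈ range (n + 1), ∑ m' ∈ range (n + 1), amPairing ω n m m' * lam ^ (m + m') := by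
  simp only [PAM, MAM_eq_sum_amCoeff, transpose_sum, transpose_smul, sum_mul_sum, trace_sum,
    smul_mul_smul, trace_smul, smul_eq_mul, ← pow_add]
  rw [intervalIntegral.integral_finsetSum fun m _ =>
    Continuous.intervalIntegrable (by fun_prop) _ _]
  refine sum_congr rfl fun m _ => ?_
  rw [intervalIntegral.integral_finsetSum fun m' _ =>
    Continuous.intervalIntegrable (by fun_prop) _ _]
  refine sum_congr rfl fun m' _ => ?_
  rw [intervalIntegral.integral_const_mul, amPairing, mul_comm]

theorem amPairing_eq_zero_of_lt {n m m' : ℕ} (h : n < m ∨ n < m') : amPairing ω n m m' = 0 := by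
  rcases h with h | h <;>
    simp [amPairing, amCoeff, perturbCoeff_eq_zero_of_lt _ _ h]

theorem amPairing_comm (n m m' : ℕ) : amPairing ω n m m' = amPairing ω n m' m := by
  refine intervalIntegral.integral_congr fun θ _ => ?_
  rw [← trace_transpose, transpose_mul, transpose_transpose]

theorem amPairing_eq_zero_of_odd {n m m' : ℕ} (h : Odd (m + m')) : amPairing ω n m m' = 0 := by
  set g := fun θ => trace ((amCoeff ω n m θ)ᵀ * amCoeff ω n m' θ)
  have hshift : ∀ θ, g (θ + 1 / 2) = -g θ := fun θ => by
    simp only [g, amCoeff_add_half, transpose_smul, smul_mul_smul, ← pow_add, h.neg_one_pow,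
      neg_one_smul, trace_neg]
  have hper : Function.Periodic g 1 := fun θ => by simp only [g, amCoeff_add_one]
  have : amPairing ω n m m' = -amPairing ω n m m' := by
    calc amPairing ω n m m' = ∫ θ in (0 : ℝ)..1, g (θ + 1 / 2) := by
          rw [intervalIntegral.integral_comp_add_right, zero_add,
            show (1 : ℝ) + 1 / 2 = 1 / 2 + 1 by ring, hper.intervalIntegral_add_eq (1 / 2) 0,
            zero_add]
          rfl
      _ = -amPairing ω n m m' := by simp only [hshift, intervalIntegral.integral_neg]; rfl
  linarith

/-- The coefficient `α̃_{2k}` of `λ ^ (2k)` in `P̃_n(λ)`. -/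
noncomputable def amLambdaCoeff (n k : ℕ) : ℝ :=
  ∑ p ∈ antidiagonal (2 * k), amPairing ω n p.1 p.2

theorem PAM_eq_sum_amLambdaCoeff (n : ℕ) (lam : ℝ) :
    PAM ω n lam = ∑ k ∈ range (n + 1), amLambdaCoeff ω n k * lam ^ (2 * k) := by
  rw [PAM_eq_sum_amPairing, sum_range_sum_range_eq_sum_antidiagonal n _
    fun m m' h => by rw [amPairing_eq_zero_of_lt ω h, zero_mul]]
  rw [sum_range_two_mul_add_one_of_odd_eq_zero _ fun s hs => sum_eq_zero fun p hp => by
    rw [amPairing_eq_zero_of_odd ω ((mem_antidiagonal.mp hp).symm ▸ hs), zero_mul]]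
  refine sum_congr rfl fun k _ => ?_
  rw [amLambdaCoeff, sum_mul]
  exact sum_congr rfl fun p hp => by rw [mem_antidiagonal.mp hp]

theorem amLambdaCoeff_one (n : ℕ) :
    amLambdaCoeff ω n 1 = amPairing ω n 1 1 + 2 * amPairing ω n 0 2 := by
  simp only [amLambdaCoeff, Nat.sum_antidiagonal_eq_sum_range_succ_mk, sum_range_succ,
    sum_range_zero]
  rw [amPairing_comm ω n 2 0]
  ring


theorem trace_amCoeff_one_one (n : ℕ) (θ : ℝ) :
    trace ((amCoeff ω n 1 θ)ᵀ * amCoeff ω n 1 θ) = ∑ j ∈ range n, ∑ k ∈ range n,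
      vAM ω (j + 1) θ * vAM ω (k + 1) θ * cos ((j - k) * (π / 2)) ^ 2 := by
  rw [amCoeff, perturbCoeff_one_right, transpose_sum, sum_mul_sum, trace_sum]
  refine sum_congr rfl fun j hj => ?_
  rw [trace_sum]
  refine sum_congr rfl fun k hk => ?_
  simp only [Matrix.mul_smul, Matrix.smul_mul, transpose_smul, smul_mul_smul, trace_smul,
    rot_pow, trace_rot_single_rot, smul_eq_mul]
  rw [Nat.cast_sub_one_sub (mem_range.mp hj), Nat.cast_sub_one_sub (mem_range.mp hk),
    show (k : ℝ) * (π / 2) - j * (π / 2) = -((j - k) * (π / 2)) by ring, cos_neg]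
  ring_nf

theorem trace_amCoeff_zero_two (n : ℕ) (θ : ℝ) :
    trace ((amCoeff ω n 0 θ)ᵀ * amCoeff ω n 2 θ) = ∑ k ∈ range n, ∑ j ∈ range k,
      vAM ω (k + 1) θ * vAM ω (j + 1) θ * -sin ((k - j) * (π / 2)) ^ 2 := by
  rw [amCoeff, amCoeff, perturbCoeff_zero_right, perturbCoeff_two_right, mul_sum, trace_sum]
  refine sum_congr rfl fun k hk => ?_
  rw [mul_sum, trace_sum]
  refine sum_congr rfl fun j hj => ?_
  simp only [Matrix.mul_smul, Matrix.smul_mul, smul_smul, trace_smul, rot_pow,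
    trace_rot_rot_single_rot_single_rot, smul_eq_mul]
  rw [Nat.cast_sub_one_sub (mem_range.mp hk), Nat.cast_sub_one_sub (mem_range.mp hj),
    show ((k : ℝ) - 1 - j) * (π / 2) = (k - j) * (π / 2) - π / 2 by ring,
    show ((n : ℝ) - 1 - k) * (π / 2) + j * (π / 2) - n * (π / 2) = -((k - j) * (π / 2)) - π / 2
      by ring, cos_sub_pi_div_two, cos_sub_pi_div_two, sin_neg]
  ring

theorem amPairing_one_one (n : ℕ) : amPairing ω n 1 1 = ∑ j ∈ range n, ∑ k ∈ range n,
    2 * cos (2 * π * ((j - k) * ω)) * cos ((j - k) * (π / 2)) ^ 2 := by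
  simp only [amPairing, trace_amCoeff_one_one]
  exact integral_sum_sum_vAM_mul_vAM ω _ _ fun j k => cos ((j - k) * (π / 2)) ^ 2

theorem amPairing_zero_two (n : ℕ) : amPairing ω n 0 2 = ∑ k ∈ range n, ∑ j ∈ range k,
    2 * cos (2 * π * ((k - j) * ω)) * -sin ((k - j) * (π / 2)) ^ 2 := by
  simp only [amPairing, trace_amCoeff_zero_two]
  exact integral_sum_sum_vAM_mul_vAM ω _ _ fun k j => -sin ((k - j) * (π / 2)) ^ 2

theorem amPairing_one_one_add_two_mul_amPairing_zero_two (n : ℕ) :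
    amPairing ω n 1 1 + 2 * amPairing ω n 0 2 = ∑ j ∈ range n, ∑ k ∈ range n,
      2 * cos (j * (2 * π * (ω + 1 / 2)) - k * (2 * π * (ω + 1 / 2))) := by
  set f : ℕ → ℕ → ℝ := fun j k => 2 * cos (2 * π * ((j - k) * ω)) * sin ((j - k) * (π / 2)) ^ 2
  have hsymm : ∀ j k, f j k = f k j := fun j k => by
    simp only [f, show (k : ℝ) - j = -(j - k) by ring, neg_mul, mul_neg, cos_neg, sin_neg,
      neg_sq]
  have hzero : 2 * amPairing ω n 0 2 = -∑ j ∈ range n, ∑ k ∈ range n, f j k := by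
    rw [amPairing_zero_two, sum_range_sum_range_eq_two_nsmul_sum_lt f hsymm
      (fun j => by simp [f]), nsmul_eq_mul, Nat.cast_ofNat, ← mul_neg]
    simp only [f, mul_neg, sum_neg_distrib]
  rw [amPairing_one_one, hzero, ← sub_eq_add_neg, ← sum_sub_distrib]
  refine sum_congr rfl fun j _ => ?_
  rw [← sum_sub_distrib]
  refine sum_congr rfl fun k _ => ?_
  have hsin : sin ((j - k) * π) = 0 := by exact_mod_cast sin_int_mul_pi (j - k)
  rw [show (j : ℝ) * (2 * π * (ω + 1 / 2)) - k * (2 * π * (ω + 1 / 2)) =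
      2 * π * ((j - k) * ω) + 2 * ((j - k) * (π / 2)) by ring, cos_add, cos_two_mul',
    show 2 * ((j - k) * (π / 2)) = (j - k) * π by ring, hsin]
  ring

end AlmostMathieu

section Geometric

open Complex

theorem norm_sum_exp_mul_I_sq {ι : Type*} (s : Finset ι) (t : ι → ℝ) :
    ‖∑ j ∈ s, exp (t j * I)‖ ^ 2 = ∑ j ∈ s, ∑ k ∈ s, Real.cos (t j - t k) := by
  have hterm : ∀ j k,
      exp (t j * I) * (starRingEnd ℂ) (exp (t k * I)) = exp ((t j - t k : ℝ) * I) := fun j k => by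
    rw [← exp_conj, map_mul, conj_ofReal, conj_I, ← Complex.exp_add]
    push_cast
    ring_nf
  rw [Complex.sq_norm, ← ofReal_re (normSq _), ← mul_conj, map_sum, sum_mul_sum, re_sum]
  simp only [hterm, re_sum, exp_ofReal_mul_I_re]

theorem sum_sum_cos_eq_norm_one_sub_exp_sq_div (ω : ℝ) (hω : Real.cos (π * ω) ≠ 0) (n : ℕ) :
    ∑ j ∈ range n, ∑ k ∈ range n,
        2 * Real.cos (j * (2 * π * (ω + 1 / 2)) - k * (2 * π * (ω + 1 / 2))) =
      ‖1 - exp (2 * π * I * (ω + 1 / 2) * n)‖ ^ 2 / (2 * Real.cos (π * ω) ^ 2) := by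
  set ζ := exp ((2 * π * (ω + 1 / 2) : ℝ) * I)
  have hpow : ∀ j : ℕ, ζ ^ j = exp ((j * (2 * π * (ω + 1 / 2)) : ℝ) * I) := fun j => by
    rw [← Complex.exp_nat_mul]; push_cast; ring_nf
  have hnorm : ‖ζ - 1‖ = 2 * |Real.cos (π * ω)| := by
    rw [show ζ = exp (I * (2 * π * (ω + 1 / 2) : ℝ)) by rw [mul_comm],
      norm_exp_I_mul_ofReal_sub_one,
      show 2 * π * (ω + 1 / 2) / 2 = π * ω + π / 2 by ring, Real.sin_add_pi_div_two, norm_mul,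
      Real.norm_eq_abs, Real.norm_eq_abs, abs_two]
  have hζ : ζ ≠ 1 := fun h => hω (by simpa [h] using hnorm.symm)
  have hζn : ζ ^ n = exp (2 * π * I * (ω + 1 / 2) * n) := by
    rw [hpow]; push_cast; ring_nf
  calc ∑ j ∈ range n, ∑ k ∈ range n,
        2 * Real.cos (j * (2 * π * (ω + 1 / 2)) - k * (2 * π * (ω + 1 / 2)))
      = 2 * ‖∑ j ∈ range n, ζ ^ j‖ ^ 2 := by
        simp only [hpow, norm_sum_exp_mul_I_sq, mul_sum]
    _ = 2 * ‖(ζ ^ n - 1) / (ζ - 1)‖ ^ 2 := by rw [geom_sum_eq hζ]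
    _ = ‖1 - exp (2 * π * I * (ω + 1 / 2) * n)‖ ^ 2 / (2 * Real.cos (π * ω) ^ 2) := by
        rw [norm_div, hnorm, norm_sub_rev, hζn, div_pow, mul_pow, sq_abs]
        field_simp

end Geometric

theorem stmt_17_general (ω : ℝ) (hω : Real.cos (Real.pi * ω) ≠ 0) (n : ℕ) :
    ∃ α : ℕ → ℝ,
      (∀ lam' : ℝ, PAM ω n lam' = ∑ k ∈ Finset.range (n + 1), α k * lam' ^ (2 * k)) ∧
      α 1 = ‖(1 : ℂ) - Complex.exp (2 * (Real.pi : ℂ) * Complex.I *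
              ((ω : ℂ) + 1 / 2) * (n : ℂ))‖ ^ 2 / (2 * Real.cos (Real.pi * ω) ^ 2) ∧
      α 1 ≤ 2 / Real.cos (Real.pi * ω) ^ 2 := by
  have hα₁ : amLambdaCoeff ω n 1 = ‖(1 : ℂ) - Complex.exp (2 * (Real.pi : ℂ) * Complex.I *
      ((ω : ℂ) + 1 / 2) * (n : ℂ))‖ ^ 2 / (2 * Real.cos (Real.pi * ω) ^ 2) := by
    rw [amLambdaCoeff_one, amPairing_one_one_add_two_mul_amPairing_zero_two,
      sum_sum_cos_eq_norm_one_sub_exp_sq_div ω hω]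
  refine ⟨amLambdaCoeff ω n, PAM_eq_sum_amLambdaCoeff ω n, hα₁, ?_⟩
  have hle : ‖(1 : ℂ) - Complex.exp (2 * (Real.pi : ℂ) * Complex.I *
      ((ω : ℂ) + 1 / 2) * (n : ℂ))‖ ≤ 2 :=
    (norm_sub_le _ _).trans (by simp [Complex.norm_exp]; norm_num)
  calc amLambdaCoeff ω n 1 ≤ 2 ^ 2 / (2 * Real.cos (Real.pi * ω) ^ 2) := by
        rw [hα₁]; gcongr
    _ = 2 / Real.cos (Real.pi * ω) ^ 2 := by ring

/-- For the Almost-Mathieu model, `P̃_n` is an even polynomial in `λ` whose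
`λ²`-coefficient equals `|1 - e[(ω + 1/2)n]|² / (2cos²(πω)) ≤ 2/cos²(πω)`,
a bound independent of `n`. -/
theorem stmt_17 (ω : ℝ) (hω : Real.cos (Real.pi * ω) ≠ 0) (n : ℕ) (hn : 1 ≤ n) :
    ∃ α : ℕ → ℝ,
      (∀ lam' : ℝ, PAM ω n lam' = ∑ k ∈ Finset.range (n + 1), α k * lam' ^ (2 * k)) ∧
      α 1 = ‖(1 : ℂ) - Complex.exp (2 * (Real.pi : ℂ) * Complex.I *
              ((ω : ℂ) + 1 / 2) * (n : ℂ))‖ ^ 2 / (2 * Real.cos (Real.pi * ω) ^ 2) ∧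
      α 1 ≤ 2 / Real.cos (Real.pi * ω) ^ 2 :=
  stmt_17_general ω hω n
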